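/- arXiv:solv-int/9909025 — 9 statements merged into one kernel-verified Lean document; each statement's English description precedes it below -/
import Mathlib

section
/- Let E(q,q̇) = Σ_{i,j} A_{ij}(q) q̇_i q̇_j + k(q) with A(q) a symmetric nonsingular n×n matrix of smooth functions. Then the quasi-Lagrangian equations 0 = d/dx(∂E/∂q̇_i) + ∂E/∂q_i are equivalent to the Newton equations q̈ = -(1/2)A^{-1}∇k (with velocity-independent force) if and only if the matrix entries satisfy the cyclic conditions ∂_i A_{jk} + ∂_j A_{ki} + ∂_k A_{ij} = 0 for all i,j,k. -/
open scoped BigOperators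
open Matrix

/-- Partial derivative `∂f/∂q_i` of a function on `ℝⁿ`. -/
noncomputable def pd {n : ℕ} (i : Fin n) (f : (Fin n → ℝ) → ℝ) (q : Fin n → ℝ) : ℝ :=
  fderiv ℝ f q (Pi.single i 1)

/-- The cyclic coefficient `∂ᵢAⱼₘ + ∂ⱼAₘᵢ + ∂ₘAᵢⱼ`. -/
noncomputable def Cc {n : ℕ} (A : (Fin n → ℝ) → Matrix (Fin n) (Fin n) ℝ)
    (q : Fin n → ℝ) (i j m : Fin n) : ℝ :=
  pd i (fun p => A p j m) q + pd j (fun p => A p m i) q + pd m (fun p => A p i j) q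

/-- Auxiliary: `B *ᵥ (-(1/2) • (B⁻¹ *ᵥ g)) = -(1/2) • g` componentwise. -/
lemma key_inv {n : ℕ} (B : Matrix (Fin n) (Fin n) ℝ) (hB : IsUnit B.det)
    (g : Fin n → ℝ) (i : Fin n) :
    ∑ j, B i j * (-(1/2) * ∑ m, B⁻¹ j m * g m) = -(1/2) * g i := by
  have h : ∀ j, -(1/2) * ∑ m, B⁻¹ j m * g m = ((-(1/2) : ℝ) • (B⁻¹ *ᵥ g)) j := by
    intro j
    simp [Matrix.mulVec, dotProduct]
  simp_rw [h]
  have h2 : ∑ j, B i j * ((-(1/2) : ℝ) • (B⁻¹ *ᵥ g)) j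
      = (B *ᵥ ((-(1/2) : ℝ) • (B⁻¹ *ᵥ g))) i := rfl
  rw [h2, Matrix.mulVec_smul, Matrix.mulVec_mulVec, Matrix.mul_nonsing_inv _ hB,
    Matrix.one_mulVec]
  simp

/-- For `E(q,q̇) = q̇ᵗA(q)q̇ + k(q)` with `A` symmetric and nonsingular,
the quasi-Lagrangian equations `0 = δᵢ⁺E` (whose value along a curve with position `q`,
velocity `v` and acceleration `a` is
`2∑ⱼ Aᵢⱼ aⱼ + ∂ᵢk + ∑ⱼₘ (∂ᵢAⱼₘ + ∂ⱼAₘᵢ + ∂ₘAᵢⱼ) vⱼ vₘ`)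
are equivalent to the Newton equations `a = -(1/2)A⁻¹∇k` if and only if the cyclic
conditions `∂ᵢAⱼₘ + ∂ⱼAₘᵢ + ∂ₘAᵢⱼ = 0` hold. -/
theorem stmt_0 {n : ℕ} (A : (Fin n → ℝ) → Matrix (Fin n) (Fin n) ℝ)
    (k : (Fin n → ℝ) → ℝ)
    (hsym : ∀ q, (A q).IsSymm)
    (hns : ∀ q, IsUnit (A q).det)
    (hA : ∀ i j, ContDiff ℝ (⊤ : ℕ∞) fun q => A q i j)
    (hk : ContDiff ℝ (⊤ : ℕ∞) k) :
    (∀ q v a : Fin n → ℝ,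
        (∀ i, 2 * ∑ j, A q i j * a j + pd i k q
            + ∑ j, ∑ m, (pd i (fun p => A p j m) q + pd j (fun p => A p m i) q
                + pd m (fun p => A p i j) q) * v j * v m = 0)
        ↔ a = fun i => -(1/2) * ∑ j, (A q)⁻¹ i j * pd j k q)
    ↔ (∀ (q : Fin n → ℝ) (i j m : Fin n),
        pd i (fun p => A p j m) q + pd j (fun p => A p m i) q
          + pd m (fun p => A p i j) q = 0) := by
  have hs : ∀ q i j, A q i j = A q j i := fun q i j => (hsym q).apply j i
  have hCc : ∀ (q : Fin n → ℝ) (i j m : Fin n),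
      pd i (fun p => A p j m) q + pd j (fun p => A p m i) q + pd m (fun p => A p i j) q
        = Cc A q i j m := fun _ _ _ _ => rfl
  -- symmetry of the cyclic coefficient in its last two indices
  have hCsymm : ∀ q i j m, Cc A q i j m = Cc A q i m j := by
    intro q i j m
    unfold Cc
    have h1 : (fun p => A p j m) = fun p => A p m j := funext fun p => hs p j m
    have h2 : (fun p => A p m i) = fun p => A p i m := funext fun p => hs p m i
    have h3 : (fun p => A p i j) = fun p => A p j i := funext fun p => hs p i j
    rw [h1, h2, h3]; ring
  simp only [hCc]
  constructor
  · intro hiff q i j m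
    set a₀ : Fin n → ℝ := fun i => -(1/2) * ∑ j, (A q)⁻¹ i j * pd j k q with ha₀
    have hbase : ∀ i, 2 * ∑ j, A q i j * a₀ j + pd i k q = 0 := by
      intro i
      rw [ha₀]
      rw [key_inv (A q) (hns q) (fun j => pd j k q) i]
      ring
    have hQ : ∀ v : Fin n → ℝ, ∀ i, ∑ j, ∑ m, Cc A q i j m * v j * v m = 0 := by
      intro v i
      have h := ((hiff q v a₀).mpr rfl) i
      have hb := hbase i
      linarith
    -- diagonal values vanish
    have hdiag : ∀ i j, Cc A q i j j = 0 := by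
      intro i j
      have h := hQ (Pi.single j 1) i
      simpa [Pi.single_apply, Finset.sum_ite_eq', mul_ite, ite_mul] using h
    by_cases hjm : j = m
    · subst hjm; exact hdiag i j
    · set w : Fin n → ℝ := fun t => (if t = j then (1:ℝ) else 0) + (if t = m then 1 else 0)
        with hw
      have h := hQ w i
      have hsum : ∑ j', ∑ m', Cc A q i j' m' * w j' * w m'
          = Cc A q i j j + Cc A q i j m + Cc A q i m j + Cc A q i m m := by
        simp only [hw, mul_add, add_mul, Finset.sum_add_distrib, mul_ite, ite_mul,
          mul_one, mul_zero, one_mul, zero_mul, Finset.sum_ite_eq', Finset.mem_univ, if_true]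
        ring
      rw [hsum] at h
      have h1 := hdiag i j
      have h2 := hdiag i m
      have h3 := hCsymm q i j m
      linarith
  · intro hc q v a
    simp only [hc, zero_mul, Finset.sum_const_zero, add_zero]
    constructor
    · intro h
      funext i
      have hlin : A q *ᵥ a = fun i => -(1/2) * pd i k q := by
        funext i'
        have h' := h i'
        have h'' : ∑ j, A q i' j * a j = -(1/2) * pd i' k q := by linarith
        simpa [Matrix.mulVec, dotProduct] using h''
      have ha : a = (A q)⁻¹ *ᵥ (A q *ᵥ a) := by
        rw [Matrix.mulVec_mulVec, Matrix.nonsing_inv_mul _ (hns q), Matrix.one_mulVec]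
      rw [ha, hlin]
      simp only [Matrix.mulVec, dotProduct]
      rw [Finset.mul_sum]
      congr 1
      funext j
      ring
    · intro h i
      subst h
      rw [key_inv (A q) (hns q) (fun j => pd j k q) i]
      ring
end

section
/- Let E(q,q̇) = q̇ᵗA(q)q̇ + k(q) with A symmetric and nonsingular. The function E is a constant of motion along solutions of the quasi-Lagrangian system 0 = δ⁺E if and only if the cyclic conditions ∂_i A_{jk} + ∂_j A_{ki} + ∂_k A_{ij} = 0 hold for all i,j,k. -/
open scoped BigOperators

lemma lin_single {n : ℕ} (i j m : Fin n) (c1 c2 c3 : ℝ) (f : Fin n → ℝ) :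
    ∑ p, (c1 * (Pi.single i (1:ℝ) : Fin n → ℝ) p + c2 * (Pi.single j (1:ℝ) : Fin n → ℝ) p + c3 * (Pi.single m (1:ℝ) : Fin n → ℝ) p) * f p
      = c1 * f i + c2 * f j + c3 * f m := by
  simp [add_mul, Finset.sum_add_distrib, Pi.single_apply, mul_assoc, ite_mul,
    Finset.sum_ite_eq]

lemma polar {n : ℕ} (B : Fin n → Fin n → Fin n → ℝ)
    (hc : ∀ p q r, B p q r = B q r p)
    (hs : ∀ p q r, B p q r = B p r q)
    (hC : ∀ v : Fin n → ℝ, ∑ p, ∑ q, ∑ r, B p q r * v p * v q * v r = 0)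
    (i j m : Fin n) : B i j m = 0 := by
  have hE : ∀ c1 c2 c3 : ℝ,
      c1 * (c1 * (c1 * B i i i + c2 * B i i j + c3 * B i i m)
          + c2 * (c1 * B i j i + c2 * B i j j + c3 * B i j m)
          + c3 * (c1 * B i m i + c2 * B i m j + c3 * B i m m))
    + c2 * (c1 * (c1 * B j i i + c2 * B j i j + c3 * B j i m)
          + c2 * (c1 * B j j i + c2 * B j j j + c3 * B j j m)
          + c3 * (c1 * B j m i + c2 * B j m j + c3 * B j m m))
    + c3 * (c1 * (c1 * B m i i + c2 * B m i j + c3 * B m i m)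
          + c2 * (c1 * B m j i + c2 * B m j j + c3 * B m j m)
          + c3 * (c1 * B m m i + c2 * B m m j + c3 * B m m m)) = 0 := by
    intro c1 c2 c3
    have h := hC (fun p => c1 * (Pi.single i (1:ℝ) : Fin n → ℝ) p + c2 * (Pi.single j (1:ℝ) : Fin n → ℝ) p + c3 * (Pi.single m (1:ℝ) : Fin n → ℝ) p)
    have h2 : ∑ p, ∑ q, ∑ r, B p q r
          * (c1 * (Pi.single i (1:ℝ) : Fin n → ℝ) p + c2 * (Pi.single j (1:ℝ) : Fin n → ℝ) p + c3 * (Pi.single m (1:ℝ) : Fin n → ℝ) p)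
          * (c1 * (Pi.single i (1:ℝ) : Fin n → ℝ) q + c2 * (Pi.single j (1:ℝ) : Fin n → ℝ) q + c3 * (Pi.single m (1:ℝ) : Fin n → ℝ) q)
          * (c1 * (Pi.single i (1:ℝ) : Fin n → ℝ) r + c2 * (Pi.single j (1:ℝ) : Fin n → ℝ) r + c3 * (Pi.single m (1:ℝ) : Fin n → ℝ) r)
        = ∑ p, (c1 * (Pi.single i (1:ℝ) : Fin n → ℝ) p + c2 * (Pi.single j (1:ℝ) : Fin n → ℝ) p + c3 * (Pi.single m (1:ℝ) : Fin n → ℝ) p)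
          * ∑ q, (c1 * (Pi.single i (1:ℝ) : Fin n → ℝ) q + c2 * (Pi.single j (1:ℝ) : Fin n → ℝ) q + c3 * (Pi.single m (1:ℝ) : Fin n → ℝ) q)
          * ∑ r, (c1 * (Pi.single i (1:ℝ) : Fin n → ℝ) r + c2 * (Pi.single j (1:ℝ) : Fin n → ℝ) r + c3 * (Pi.single m (1:ℝ) : Fin n → ℝ) r)
          * B p q r := by
      refine Finset.sum_congr rfl fun p _ => ?_
      rw [Finset.mul_sum]
      refine Finset.sum_congr rfl fun q _ => ?_
      rw [Finset.mul_sum, Finset.mul_sum]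
      refine Finset.sum_congr rfl fun r _ => ?_
      ring
    rw [h2] at h
    simp only [lin_single] at h
    linarith [h]
  have h1 := hE 1 1 1
  have h2 := hE 1 1 (-1)
  have h3 := hE 1 (-1) 1
  have h4 := hE (-1) 1 1
  have h5 := hE 1 (-1) (-1)
  have h6 := hE (-1) 1 (-1)
  have h7 := hE (-1) (-1) 1
  have h8 := hE (-1) (-1) (-1)
  have e1 := hc i j m
  have e2 := hc j m i
  have e3 := hs i j m
  have e4 := hs j m i
  have e5 := hs m i j
  have e6 := hc i m j
  linarith

/-- `E = q̇ᵗA(q)q̇ + k(q)` is a constant of motion along solutions of the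
quasi-Lagrangian system `0 = δ⁺E` if and only if the cyclic conditions hold.  Along a
curve with position `q`, velocity `v`, acceleration `a`, the quasi-Lagrangian expression
`δᵢ⁺E` equals `2∑ⱼAᵢⱼaⱼ + ∂ᵢk + ∑ⱼₘ(∂ᵢAⱼₘ+∂ⱼAₘᵢ+∂ₘAᵢⱼ)vⱼvₘ`, and the total derivative
of `E` equals `∑ᵢ(2∑ⱼAᵢⱼaⱼ + ∂ᵢk)vᵢ + (1/3)∑ᵢⱼₘ(∂ᵢAⱼₘ+∂ⱼAₘᵢ+∂ₘAᵢⱼ)vᵢvⱼvₘ`. -/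
theorem stmt_1 {n : ℕ} (A : (Fin n → ℝ) → Matrix (Fin n) (Fin n) ℝ)
    (k : (Fin n → ℝ) → ℝ)
    (hsym : ∀ q, (A q).IsSymm)
    (hns : ∀ q, IsUnit (A q).det)
    (hA : ∀ i j, ContDiff ℝ (⊤ : ℕ∞) fun q => A q i j)
    (hk : ContDiff ℝ (⊤ : ℕ∞) k) :
    (∀ q v a : Fin n → ℝ,
        (∀ i, 2 * ∑ j, A q i j * a j + pd i k q
            + ∑ j, ∑ m, (pd i (fun p => A p j m) q + pd j (fun p => A p m i) q
                + pd m (fun p => A p i j) q) * v j * v m = 0) →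
        ∑ i, (2 * ∑ j, A q i j * a j + pd i k q) * v i
          + (1/3) * ∑ i, ∑ j, ∑ m, (pd i (fun p => A p j m) q + pd j (fun p => A p m i) q
              + pd m (fun p => A p i j) q) * v i * v j * v m = 0)
    ↔ (∀ (q : Fin n → ℝ) (i j m : Fin n),
        pd i (fun p => A p j m) q + pd j (fun p => A p m i) q
          + pd m (fun p => A p i j) q = 0) := by
  set B : (Fin n → ℝ) → Fin n → Fin n → Fin n → ℝ := fun q i j m =>
    pd i (fun p => A p j m) q + pd j (fun p => A p m i) q + pd m (fun p => A p i j) q with hB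
  have hAsym : ∀ (a b : Fin n), (fun p => A p a b) = (fun p => A p b a) :=
    fun a b => funext fun p => (hsym p).apply b a
  have hcyc : ∀ q p r s, B q p r s = B q r s p := by
    intro q p r s; simp only [hB]; ring
  have hswap : ∀ q p r s, B q p r s = B q p s r := by
    intro q p r s
    simp only [hB]
    rw [hAsym r s, hAsym s p, hAsym p r]
    ring
  constructor
  · intro h q i j m
    refine polar (B q) (hcyc q) (hswap q) ?_ i j m
    intro v
    -- construct the acceleration solving the quasi-Lagrangian equations
    set S : Fin n → ℝ := fun i => ∑ j, ∑ m, B q i j m * v j * v m with hS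
    set w : Fin n → ℝ := fun i => (-(pd i k q) - S i) / 2 with hw
    set a : Fin n → ℝ := ((A q)⁻¹).mulVec w with haa
    have ha : ∀ i, ∑ j, A q i j * a j = w i := by
      intro i
      have h1 : (A q).mulVec a = w := by
        rw [haa, Matrix.mulVec_mulVec, Matrix.mul_nonsing_inv _ (hns q), Matrix.one_mulVec]
      have h2 : ∑ j, A q i j * a j = (A q).mulVec a i := by
        simp [Matrix.mulVec, dotProduct]
      rw [h2, h1]
    have hprem : ∀ i, 2 * ∑ j, A q i j * a j + pd i k q
            + ∑ j, ∑ m, (pd i (fun p => A p j m) q + pd j (fun p => A p m i) q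
                + pd m (fun p => A p i j) q) * v j * v m = 0 := by
      intro i
      have : (∑ j, ∑ m, (pd i (fun p => A p j m) q + pd j (fun p => A p m i) q
                + pd m (fun p => A p i j) q) * v j * v m) = S i := rfl
      rw [this, ha i, hw]
      ring
    have hconc := h q v a hprem
    have hSv : ∑ i, S i * v i = ∑ i, ∑ j, ∑ m, B q i j m * v i * v j * v m := by
      refine Finset.sum_congr rfl fun i _ => ?_
      rw [hS]
      rw [Finset.sum_mul]
      refine Finset.sum_congr rfl fun j _ => ?_
      rw [Finset.sum_mul]
      refine Finset.sum_congr rfl fun m' _ => ?_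
      ring
    have hc1 : ∑ i, (2 * ∑ j, A q i j * a j + pd i k q) * v i = -∑ i, S i * v i := by
      rw [← Finset.sum_neg_distrib]
      refine Finset.sum_congr rfl fun i _ => ?_
      rw [ha i, hw]
      ring
    have hT : (∑ i, ∑ j, ∑ m, (pd i (fun p => A p j m) q + pd j (fun p => A p m i) q
              + pd m (fun p => A p i j) q) * v i * v j * v m)
        = ∑ i, ∑ j, ∑ m, B q i j m * v i * v j * v m := rfl
    rw [hc1, hT, ← hSv] at hconc
    linarith
  · intro hcy q v a hprem
    simp only [hcy, zero_mul, Finset.sum_const_zero, add_zero, mul_zero] at hprem ⊢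
    simp [hprem]
end

section
/- For n = 2 with coordinates (r,w), the general solution of the cyclic conditions ∂_i A_{jk} + ∂_j A_{ki} + ∂_k A_{ij} = 0 for a symmetric 2×2 matrix A(r,w) of smooth functions is A_{11}(w) = a w² + b w + α, 2A_{12}(r,w) = -2arw - br - cw + β, A_{22}(r) = a r² + c r + γ, for some real constants a,b,c,α,β,γ. In particular, A_{11} depends only on w and A_{22} depends only on r. -/
/-- Partial derivative with respect to the first variable. -/
noncomputable def pr (f : ℝ → ℝ → ℝ) (r w : ℝ) : ℝ := deriv (fun x => f x w) r

/-- Partial derivative with respect to the second variable. -/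
noncomputable def pw (f : ℝ → ℝ → ℝ) (r w : ℝ) : ℝ := deriv (fun y => f r y) w

lemma diff_fst {F : ℝ → ℝ → ℝ} (h : ContDiff ℝ (⊤ : ℕ∞) fun p : ℝ × ℝ => F p.1 p.2) (w : ℝ) :
    Differentiable ℝ (fun x => F x w) := by
  have hd := h.differentiable (by simp)
  exact fun x => (hd (x, w)).comp (f := fun x : ℝ => (x, w)) x
    (differentiableAt_id.prodMk (differentiableAt_const w))

lemma diff_snd {F : ℝ → ℝ → ℝ} (h : ContDiff ℝ (⊤ : ℕ∞) fun p : ℝ × ℝ => F p.1 p.2) (r : ℝ) :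
    Differentiable ℝ (fun y => F r y) := by
  have hd := h.differentiable (by simp)
  exact fun y => (hd (r, y)).comp y ((differentiableAt_const r).prodMk differentiableAt_id)

lemma lin_of_deriv {F : ℝ → ℝ} (hF : Differentiable ℝ F) {c : ℝ}
    (h : ∀ x, deriv F x = c) (x : ℝ) : F x = c * x + F 0 := by
  have hz : ∀ y, deriv (fun x => F x - c * x) y = 0 := by
    intro y
    have h2 : HasDerivAt (fun x : ℝ => c * x) c y := by simpa using (hasDerivAt_id y).const_mul c
    rw [deriv_fun_sub (hF y) h2.differentiableAt, h y, h2.deriv, sub_self]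
  have hG : Differentiable ℝ (fun x => F x - c * x) := by
    intro y
    have h2 : HasDerivAt (fun x : ℝ => c * x) c y := by simpa using (hasDerivAt_id y).const_mul c
    exact (hF y).sub h2.differentiableAt
  have := is_const_of_deriv_eq_zero hG hz x 0
  simp at this
  linarith

lemma quad_of_deriv {F : ℝ → ℝ} (hF : Differentiable ℝ F) {a b : ℝ}
    (h : ∀ x, deriv F x = 2 * a * x + b) (x : ℝ) :
    F x = a * x ^ 2 + b * x + F 0 := by
  have key : ∀ y, HasDerivAt (fun x => a * x ^ 2 + b * x) (2 * a * y + b) y := by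
    intro y
    have h1 : HasDerivAt (fun x : ℝ => a * x ^ 2) (a * (2 * y)) y := by
      simpa using (hasDerivAt_pow 2 y).const_mul a
    have h2 : HasDerivAt (fun x : ℝ => b * x) b y := by simpa using (hasDerivAt_id y).const_mul b
    have := h1.fun_add h2
    exact this.congr_deriv (by ring)
  have hz : ∀ y, deriv (fun x => F x - (a * x ^ 2 + b * x)) y = 0 := by
    intro y
    rw [deriv_fun_sub (hF y) (key y).differentiableAt, h y, (key y).deriv, sub_self]
  have hG : Differentiable ℝ (fun x => F x - (a * x ^ 2 + b * x)) :=
    fun y => (hF y).sub (key y).differentiableAt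
  have := is_const_of_deriv_eq_zero hG hz x 0
  simp at this
  linarith

/-- for `n = 2` with coordinates `(r,w)`, a smooth symmetric matrix
`A(r,w)` (entries `A₁₁, A₁₂, A₂₂`) satisfies the cyclic conditions
`∂ᵣA₁₁ = 0`, `∂_wA₂₂ = 0`, `∂_wA₁₁ + 2∂ᵣA₁₂ = 0`, `∂ᵣA₂₂ + 2∂_wA₁₂ = 0`
if and only if
`A₁₁ = aw² + bw + α`, `2A₁₂ = -2arw - br - cw + β`, `A₂₂ = ar² + cr + γ`
for some real constants `a,b,c,α,β,γ`. -/
theorem stmt_2 (A11 A12 A22 : ℝ → ℝ → ℝ)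
    (h11 : ContDiff ℝ (⊤ : ℕ∞) fun p : ℝ × ℝ => A11 p.1 p.2)
    (h12 : ContDiff ℝ (⊤ : ℕ∞) fun p : ℝ × ℝ => A12 p.1 p.2)
    (h22 : ContDiff ℝ (⊤ : ℕ∞) fun p : ℝ × ℝ => A22 p.1 p.2) :
    (∀ r w, pr A11 r w = 0 ∧ pw A22 r w = 0 ∧
        pw A11 r w + 2 * pr A12 r w = 0 ∧ pr A22 r w + 2 * pw A12 r w = 0)
    ↔ ∃ a b c α β γ : ℝ, ∀ r w,
        A11 r w = a * w ^ 2 + b * w + α ∧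
        2 * A12 r w = -2 * a * r * w - b * r - c * w + β ∧
        A22 r w = a * r ^ 2 + c * r + γ := by
  constructor
  · intro h
    -- A11 depends only on w, A22 only on r
    have hA11 : ∀ r w, A11 r w = A11 0 w := fun r w =>
      is_const_of_deriv_eq_zero (diff_fst h11 w) (fun x => (h x w).1) r 0
    have hA22 : ∀ r w, A22 r w = A22 r 0 := fun r w =>
      is_const_of_deriv_eq_zero (diff_snd h22 r) (fun y => (h r y).2.1) w 0
    -- partial derivatives in terms of one-variable derivatives
    have hpw11 : ∀ r w, pw A11 r w = deriv (fun y => A11 0 y) w := by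
      intro r w
      unfold pw
      congr 1
      funext y; exact hA11 r y
    have hpr22 : ∀ r w, pr A22 r w = deriv (fun x => A22 x 0) r := by
      intro r w
      unfold pr
      congr 1
      funext x; exact hA22 x w
    set df : ℝ → ℝ := fun w => deriv (fun y => A11 0 y) w with hdf_def
    set dk : ℝ → ℝ := fun r => deriv (fun x => A22 x 0) r with hdk_def
    -- A12 is linear in r for fixed w
    have EqA : ∀ r w, A12 r w = (-(df w) / 2) * r + A12 0 w := by
      intro r w
      refine lin_of_deriv (diff_fst h12 w) ?_ r
      intro x
      have h3 := (h x w).2.2.1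
      rw [hpw11 x w] at h3
      unfold pr at h3
      linarith
    -- A12 is linear in w for fixed r
    have EqB : ∀ r w, A12 r w = (-(dk r) / 2) * w + A12 r 0 := by
      intro r w
      refine lin_of_deriv (diff_snd h12 r) ?_ w
      intro y
      have h3 := (h r y).2.2.2
      rw [hpr22 r y] at h3
      unfold pw at h3
      linarith
    -- key relations
    have hdk1 : ∀ r, dk r = (df 1 - df 0) * r + dk 0 := by
      intro r
      linear_combination (-2) * (EqA r 1) + 2 * (EqB r 1) + (-2) * (EqB 0 1) + 2 * (EqA r 0)
    have hdf1 : ∀ w, df w = (df 1 - df 0) * w + df 0 := by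
      intro w
      linear_combination (-2) * (EqB 1 w) + 2 * (EqA 1 w) + (-2) * (EqA 1 0) + 2 * (EqB 0 w)
        + w * (hdk1 1)
    refine ⟨(df 1 - df 0) / 2, df 0, dk 0, A11 0 0, 2 * A12 0 0, A22 0 0, ?_⟩
    intro r w
    have hf : A11 0 w = (df 1 - df 0) / 2 * w ^ 2 + df 0 * w + A11 0 0 := by
      refine quad_of_deriv (diff_snd h11 0) ?_ w
      intro x
      rw [show deriv (fun y => A11 0 y) x = df x from rfl, hdf1 x]
      ring
    have hk : A22 r 0 = (df 1 - df 0) / 2 * r ^ 2 + dk 0 * r + A22 0 0 := by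
      refine quad_of_deriv (diff_fst h22 0) ?_ r
      intro x
      rw [show deriv (fun y => A22 y 0) x = dk x from rfl, hdk1 x]
      ring
    refine ⟨?_, ?_, ?_⟩
    · rw [hA11 r w, hf]
    · have e1 := EqA r w
      have e2 := EqB 0 w
      rw [hdf1 w] at e1
      rw [show dk 0 = (df 1 - df 0) * 0 + dk 0 by ring] at e2
      rw [e1, e2]
      ring
    · rw [hA22 r w, hk]
  · rintro ⟨a, b, c, α, β, γ, hA⟩
    have e11 : ∀ r w, A11 r w = a * w ^ 2 + b * w + α := fun r w => (hA r w).1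
    have e12 : ∀ r w, A12 r w = (-2 * a * r * w - b * r - c * w + β) / 2 := by
      intro r w
      have := (hA r w).2.1
      linarith
    have e22 : ∀ r w, A22 r w = a * r ^ 2 + c * r + γ := fun r w => (hA r w).2.2
    intro r w
    have pr11 : pr A11 r w = 0 := by
      unfold pr
      rw [show (fun x => A11 x w) = (fun _ : ℝ => a * w ^ 2 + b * w + α) from
        funext fun x => e11 x w]
      simp
    have pw22 : pw A22 r w = 0 := by
      unfold pw
      rw [show (fun y => A22 r y) = (fun _ : ℝ => a * r ^ 2 + c * r + γ) from
        funext fun y => e22 r y]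
      simp
    have pw11 : pw A11 r w = 2 * a * w + b := by
      unfold pw
      rw [show (fun y => A11 r y) = (fun y : ℝ => a * y ^ 2 + b * y + α) from
        funext fun y => e11 r y]
      have h1 : HasDerivAt (fun y : ℝ => a * y ^ 2 + b * y + α) (2 * a * w + b) w := by
        have ha : HasDerivAt (fun y : ℝ => a * y ^ 2) (a * (2 * w)) w := by
          simpa using (hasDerivAt_pow 2 w).const_mul a
        have hb : HasDerivAt (fun y : ℝ => b * y) b w := by
          simpa using (hasDerivAt_id w).const_mul b
        have := (ha.fun_add hb).add_const α
        exact this.congr_deriv (by ring)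
      exact h1.deriv
    have pr22 : pr A22 r w = 2 * a * r + c := by
      unfold pr
      rw [show (fun x => A22 x w) = (fun x : ℝ => a * x ^ 2 + c * x + γ) from
        funext fun x => e22 x w]
      have h1 : HasDerivAt (fun x : ℝ => a * x ^ 2 + c * x + γ) (2 * a * r + c) r := by
        have ha : HasDerivAt (fun x : ℝ => a * x ^ 2) (a * (2 * r)) r := by
          simpa using (hasDerivAt_pow 2 r).const_mul a
        have hc : HasDerivAt (fun x : ℝ => c * x) c r := by
          simpa using (hasDerivAt_id r).const_mul c
        have := (ha.fun_add hc).add_const γ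
        exact this.congr_deriv (by ring)
      exact h1.deriv
    have pr12 : pr A12 r w = (-2 * a * w - b) / 2 := by
      unfold pr
      rw [show (fun x => A12 x w) = (fun x : ℝ => ((-2 * a * w - b) / 2) * x + (-c * w + β) / 2)
        from funext fun x => by rw [e12 x w]; ring]
      have h1 : HasDerivAt (fun x : ℝ => ((-2 * a * w - b) / 2) * x + (-c * w + β) / 2)
          ((-2 * a * w - b) / 2) r := by
        simpa using ((hasDerivAt_id r).const_mul ((-2 * a * w - b) / 2)).add_const
          ((-c * w + β) / 2)
      exact h1.deriv
    have pw12 : pw A12 r w = (-2 * a * r - c) / 2 := by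
      unfold pw
      rw [show (fun y => A12 r y) = (fun y : ℝ => ((-2 * a * r - c) / 2) * y + (-b * r + β) / 2)
        from funext fun y => by rw [e12 r y]; ring]
      have h1 : HasDerivAt (fun y : ℝ => ((-2 * a * r - c) / 2) * y + (-b * r + β) / 2)
          ((-2 * a * r - c) / 2) w := by
        simpa using ((hasDerivAt_id w).const_mul ((-2 * a * r - c) / 2)).add_const
          ((-b * r + β) / 2)
      exact h1.deriv
    exact ⟨pr11, pw22, by rw [pw11, pr12]; ring, by rw [pr22, pw12]; ring⟩
end

section
/- Suppose the Newton system q̈ = -(1/2)A^{-1}∇k (generated as a quasi-Lagrangian system by E = q̇ᵗAq̇ + k, with A symmetric nonsingular satisfying the cyclic conditions) admits a second integral of motion F(q,q̇) = q̇ᵗB(q)q̇ + l(q) with B symmetric. Then the entries of B satisfy the cyclic conditions ∂_i B_{jk} + ∂_j B_{ki} + ∂_k B_{ij} = 0, and moreover 2B·(-(1/2)A^{-1}∇k) + ∇l = 0; in particular if det(B) ≠ 0 then A^{-1}∇k = B^{-1}∇l. -/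
open scoped BigOperators

/-- Auxiliary trilinear form. -/
noncomputable def tri {n : ℕ} (C : Fin n → Fin n → Fin n → ℝ) (u w x : Fin n → ℝ) : ℝ :=
  ∑ p, ∑ q, ∑ r, C p q r * u p * w q * x r

lemma tri_add1 {n : ℕ} (C : Fin n → Fin n → Fin n → ℝ) (u u' w x : Fin n → ℝ) :
    tri C (u + u') w x = tri C u w x + tri C u' w x := by
  simp [tri, mul_add, add_mul, Finset.sum_add_distrib]

lemma tri_add2 {n : ℕ} (C : Fin n → Fin n → Fin n → ℝ) (u w w' x : Fin n → ℝ) :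
    tri C u (w + w') x = tri C u w x + tri C u w' x := by
  simp [tri, mul_add, add_mul, Finset.sum_add_distrib]

lemma tri_add3 {n : ℕ} (C : Fin n → Fin n → Fin n → ℝ) (u w x x' : Fin n → ℝ) :
    tri C u w (x + x') = tri C u w x + tri C u w x' := by
  simp [tri, mul_add, add_mul, Finset.sum_add_distrib]

lemma tri_single {n : ℕ} (C : Fin n → Fin n → Fin n → ℝ) (i j m : Fin n) (a b c : ℝ) :
    tri C (Pi.single i a) (Pi.single j b) (Pi.single m c) = C i j m * a * b * c := by
  classical
  simp [tri, Pi.single_apply, mul_ite, ite_mul, mul_zero, zero_mul,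
    Finset.sum_ite_eq', mul_assoc]

/-- if the qLN system `q̈ = M = -(1/2)A⁻¹∇k` admits a second quadratic
integral of motion `F = q̇ᵗB(q)q̇ + l(q)` (meaning that `dF/dx` vanishes identically in the
velocities `v` along solutions), then `B` satisfies the cyclic conditions,
`2B·M + ∇l = 0`, and if `det B ≠ 0` then `A⁻¹∇k = B⁻¹∇l`. -/
theorem stmt_3 {n : ℕ} (A B : (Fin n → ℝ) → Matrix (Fin n) (Fin n) ℝ)
    (k l : (Fin n → ℝ) → ℝ)
    (hsymA : ∀ q, (A q).IsSymm)
    (hnsA : ∀ q, IsUnit (A q).det)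
    (hcycA : ∀ (q : Fin n → ℝ) (i j m : Fin n),
        pd i (fun p => A p j m) q + pd j (fun p => A p m i) q
          + pd m (fun p => A p i j) q = 0)
    (hA : ∀ i j, ContDiff ℝ (⊤ : ℕ∞) fun q => A q i j)
    (hk : ContDiff ℝ (⊤ : ℕ∞) k)
    (hsymB : ∀ q, (B q).IsSymm)
    (hB : ∀ i j, ContDiff ℝ (⊤ : ℕ∞) fun q => B q i j)
    (hl : ContDiff ℝ (⊤ : ℕ∞) l)
    (M : (Fin n → ℝ) → Fin n → ℝ)
    (hM : ∀ q i, M q i = -(1/2) * ∑ j, (A q)⁻¹ i j * pd j k q)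
    -- `F` is an integral of motion: its total derivative vanishes identically in `v`
    (hF : ∀ q v : Fin n → ℝ,
        ∑ i, v i * (2 * ∑ j, B q i j * M q j + pd i l q)
          + ∑ i, ∑ j, ∑ m, pd m (fun p => B p i j) q * v i * v j * v m = 0) :
    (∀ (q : Fin n → ℝ) (i j m : Fin n),
        pd i (fun p => B p j m) q + pd j (fun p => B p m i) q
          + pd m (fun p => B p i j) q = 0)
    ∧ (∀ q i, 2 * ∑ j, B q i j * M q j + pd i l q = 0)
    ∧ (∀ q, (B q).det ≠ 0 →
        ∀ i, ∑ j, (A q)⁻¹ i j * pd j k q = ∑ j, (B q)⁻¹ i j * pd j l q) := by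
  classical
  -- rewrite `hF` using `tri`
  have hF' : ∀ q v : Fin n → ℝ,
      (∑ i, v i * (2 * ∑ j, B q i j * M q j + pd i l q))
        + tri (fun p r s => pd s (fun x => B x p r) q) v v v = 0 := fun q v => hF q v
  -- split the linear and cubic parts
  have hLz : ∀ q v : Fin n → ℝ,
      ∑ i, v i * (2 * ∑ j, B q i j * M q j + pd i l q) = 0 := by
    intro q v
    have h1 := hF' q v
    have h2 := hF' q (fun p => 2 * v p)
    have e1 : ∑ i, (fun p => 2 * v p) i * (2 * ∑ j, B q i j * M q j + pd i l q)
        = 2 * ∑ i, v i * (2 * ∑ j, B q i j * M q j + pd i l q) := by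
      rw [Finset.mul_sum]; exact Finset.sum_congr rfl fun i _ => by ring
    have e2 : tri (fun p r s => pd s (fun x => B x p r) q) (fun p => 2 * v p)
          (fun p => 2 * v p) (fun p => 2 * v p)
        = 8 * tri (fun p r s => pd s (fun x => B x p r) q) v v v := by
      simp only [tri, Finset.mul_sum]
      exact Finset.sum_congr rfl fun i _ => Finset.sum_congr rfl fun j _ =>
        Finset.sum_congr rfl fun m _ => by ring
    rw [e1, e2] at h2
    linarith
  have hCz : ∀ q v : Fin n → ℝ,
      tri (fun p r s => pd s (fun x => B x p r) q) v v v = 0 := by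
    intro q v
    have h1 := hF' q v
    have h2 := hLz q v
    linarith
  refine ⟨?_, ?_, ?_⟩
  · -- cyclic conditions for B
    intro q i j m
    have hsym' : ∀ p r s : Fin n, pd s (fun x => B x p r) q = pd s (fun x => B x r p) q := by
      intro p r s
      have : (fun x => B x p r) = fun x => B x r p := by
        funext x
        have h := congrFun (congrFun (hsymB x) r) p
        simpa [Matrix.transpose_apply] using h
      rw [this]
    have e : ∀ a b c : ℝ,
        tri (fun p r s => pd s (fun x => B x p r) q)
          (Pi.single i a + Pi.single j b + Pi.single m c)
          (Pi.single i a + Pi.single j b + Pi.single m c)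
          (Pi.single i a + Pi.single j b + Pi.single m c) = 0 := fun a b c => hCz q _
    have e111 := e 1 1 1
    have e110 := e 1 1 0
    have e101 := e 1 0 1
    have e011 := e 0 1 1
    have e100 := e 1 0 0
    have e010 := e 0 1 0
    have e001 := e 0 0 1
    simp only [tri_add1, tri_add2, tri_add3, tri_single, mul_one, mul_zero, zero_mul,
      add_zero, zero_add] at e111 e110 e101 e011 e100 e010 e001
    linarith [hsym' i j m, hsym' i m j, hsym' j m i]
  · -- 2BM + ∇l = 0
    intro q i
    have h := hLz q (Pi.single i 1)
    simpa [Pi.single_apply, ite_mul, Finset.sum_ite_eq'] using h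
  · -- A⁻¹∇k = B⁻¹∇l when det B ≠ 0
    intro q hdet i
    have hL : ∀ i, 2 * ∑ j, B q i j * M q j + pd i l q = 0 := by
      intro i
      have h := hLz q (Pi.single i 1)
      simpa [Pi.single_apply, ite_mul, Finset.sum_ite_eq'] using h
    set u : Fin n → ℝ := fun i => ∑ j, (A q)⁻¹ i j * pd j k q with hu
    have hmv : (B q).mulVec u = fun i => pd i l q := by
      funext i
      have h := hL i
      have : ∑ j, B q i j * M q j = -(1/2) * ∑ j, B q i j * u j := by
        rw [Finset.mul_sum]
        refine Finset.sum_congr rfl fun j _ => ?_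
        rw [hM q j]; ring
      rw [this] at h
      simp only [Matrix.mulVec, dotProduct]
      linarith
    have hunit : IsUnit (B q).det := isUnit_iff_ne_zero.mpr hdet
    have : (B q)⁻¹.mulVec ((B q).mulVec u) = u := by
      rw [Matrix.mulVec_mulVec, Matrix.nonsing_inv_mul _ hunit, Matrix.one_mulVec]
    rw [hmv] at this
    have := congrFun this i
    simpa [Matrix.mulVec, dotProduct, hu] using this.symm
end

section
/- The coefficients of the fundamental equation are skew-symmetric bilinear expressions in the entries of (A,B); consequently, if A' = αA + βB and B' = γA + δB with αδ - βγ ≠ 0, then the fundamental equation associated with the pair (A',B') equals (αδ - βγ) times the fundamental equation associated with (A,B), i.e., they have the same solution set. -/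
/-- The left-hand side of the fundamental equation associated with the pair `(A,B)`. -/
noncomputable def fundLHS (A11 A12 A22 B11 B12 B22 K : ℝ → ℝ → ℝ) (r w : ℝ) : ℝ :=
    2 * (A12 r w * B22 r w - A22 r w * B12 r w) * pr (pr K) r w
  - 2 * (A11 r w * B22 r w - A22 r w * B11 r w) * pw (pr K) r w
  + 2 * (A11 r w * B12 r w - A12 r w * B11 r w) * pw (pw K) r w
  + 3 * (A12 r w * pr B22 r w - B12 r w * pr A22 r w
        + A22 r w * pw B11 r w - B22 r w * pw A11 r w) * pr K r w
  - 3 * (A11 r w * pr B22 r w - B11 r w * pr A22 r w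
        + A12 r w * pw B11 r w - B12 r w * pw A11 r w) * pw K r w
  + 3 * (pr A22 r w * pw B11 r w - pr B22 r w * pw A11 r w) * K r w

lemma diff_slice1 {f : ℝ → ℝ → ℝ} (hf : ContDiff ℝ (⊤ : ℕ∞) fun p : ℝ × ℝ => f p.1 p.2)
    (r w : ℝ) : DifferentiableAt ℝ (fun x => f x w) r := by
  have : DifferentiableAt ℝ ((fun p : ℝ × ℝ => f p.1 p.2) ∘ fun x => (x, w)) r :=
    ((hf.differentiable (by simp)).differentiableAt).comp r
      ((DifferentiableAt.prodMk differentiableAt_id (differentiableAt_const w)))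
  exact this

lemma diff_slice2 {f : ℝ → ℝ → ℝ} (hf : ContDiff ℝ (⊤ : ℕ∞) fun p : ℝ × ℝ => f p.1 p.2)
    (r w : ℝ) : DifferentiableAt ℝ (fun y => f r y) w := by
  have : DifferentiableAt ℝ ((fun p : ℝ × ℝ => f p.1 p.2) ∘ fun y => (r, y)) w :=
    ((hf.differentiable (by simp)).differentiableAt).comp w
      (DifferentiableAt.prodMk (differentiableAt_const r) differentiableAt_id)
  exact this

lemma pr_lin {f g : ℝ → ℝ → ℝ} (hf : ContDiff ℝ (⊤ : ℕ∞) fun p : ℝ × ℝ => f p.1 p.2)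
    (hg : ContDiff ℝ (⊤ : ℕ∞) fun p : ℝ × ℝ => g p.1 p.2) (a b r w : ℝ) :
    pr (fun r w => a * f r w + b * g r w) r w = a * pr f r w + b * pr g r w := by
  unfold pr
  rw [show (fun x => (fun r w => a * f r w + b * g r w) x w) =
      (fun y => a * f y w) + (fun y => b * g y w) from rfl,
    deriv_add ((diff_slice1 hf r w).const_mul a) ((diff_slice1 hg r w).const_mul b),
    deriv_const_mul a (diff_slice1 hf r w), deriv_const_mul b (diff_slice1 hg r w)]

lemma pw_lin {f g : ℝ → ℝ → ℝ} (hf : ContDiff ℝ (⊤ : ℕ∞) fun p : ℝ × ℝ => f p.1 p.2)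
    (hg : ContDiff ℝ (⊤ : ℕ∞) fun p : ℝ × ℝ => g p.1 p.2) (a b r w : ℝ) :
    pw (fun r w => a * f r w + b * g r w) r w = a * pw f r w + b * pw g r w := by
  unfold pw
  rw [show (fun y => (fun r w => a * f r w + b * g r w) r y) =
      (fun y => a * f r y) + (fun y => b * g r y) from rfl,
    deriv_add ((diff_slice2 hf r w).const_mul a) ((diff_slice2 hg r w).const_mul b),
    deriv_const_mul a (diff_slice2 hf r w), deriv_const_mul b (diff_slice2 hg r w)]

/-- the coefficients of the fundamental equation are skew-symmetric
bilinear in `(A,B)`; hence for `A' = αA + βB`, `B' = γA + δB` with `αδ - βγ ≠ 0`,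
the fundamental equation of `(A',B')` is `(αδ - βγ)` times that of `(A,B)`,
so the two equations have the same solutions. -/
theorem stmt_6 (A11 A12 A22 B11 B12 B22 : ℝ → ℝ → ℝ)
    (h11 : ContDiff ℝ (⊤ : ℕ∞) fun p : ℝ × ℝ => A11 p.1 p.2)
    (h12 : ContDiff ℝ (⊤ : ℕ∞) fun p : ℝ × ℝ => A12 p.1 p.2)
    (h22 : ContDiff ℝ (⊤ : ℕ∞) fun p : ℝ × ℝ => A22 p.1 p.2)
    (h11' : ContDiff ℝ (⊤ : ℕ∞) fun p : ℝ × ℝ => B11 p.1 p.2)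
    (h12' : ContDiff ℝ (⊤ : ℕ∞) fun p : ℝ × ℝ => B12 p.1 p.2)
    (h22' : ContDiff ℝ (⊤ : ℕ∞) fun p : ℝ × ℝ => B22 p.1 p.2)
    (α β γ δ : ℝ) (h : α * δ - β * γ ≠ 0) :
    ∀ K : ℝ → ℝ → ℝ, ∀ r w,
      fundLHS (fun r w => α * A11 r w + β * B11 r w)
              (fun r w => α * A12 r w + β * B12 r w)
              (fun r w => α * A22 r w + β * B22 r w)
              (fun r w => γ * A11 r w + δ * B11 r w)
              (fun r w => γ * A12 r w + δ * B12 r w)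
              (fun r w => γ * A22 r w + δ * B22 r w) K r w
        = (α * δ - β * γ) * fundLHS A11 A12 A22 B11 B12 B22 K r w
      ∧ (fundLHS (fun r w => α * A11 r w + β * B11 r w)
              (fun r w => α * A12 r w + β * B12 r w)
              (fun r w => α * A22 r w + β * B22 r w)
              (fun r w => γ * A11 r w + δ * B11 r w)
              (fun r w => γ * A12 r w + δ * B12 r w)
              (fun r w => γ * A22 r w + δ * B22 r w) K r w = 0
          ↔ fundLHS A11 A12 A22 B11 B12 B22 K r w = 0) := by
  intro K r w
  have key : fundLHS (fun r w => α * A11 r w + β * B11 r w)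
              (fun r w => α * A12 r w + β * B12 r w)
              (fun r w => α * A22 r w + β * B22 r w)
              (fun r w => γ * A11 r w + δ * B11 r w)
              (fun r w => γ * A12 r w + δ * B12 r w)
              (fun r w => γ * A22 r w + δ * B22 r w) K r w
        = (α * δ - β * γ) * fundLHS A11 A12 A22 B11 B12 B22 K r w := by
    unfold fundLHS
    rw [pr_lin h22 h22' α β r w, pr_lin h22 h22' γ δ r w,
        pw_lin h11 h11' α β r w, pw_lin h11 h11' γ δ r w]
    ring
  refine ⟨key, ?_⟩
  rw [key]
  constructor
  · intro h0
    rcases mul_eq_zero.mp h0 with h1 | h1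
    · exact absurd h1 h
    · exact h1
  · intro h0; rw [h0, mul_zero]
end

section
/- Let A, B be symmetric nonsingular 2×2 matrices satisfying the cyclic conditions and let K be a solution of the associated fundamental equation. Then for any μ ∈ ℝ with A + μB nonsingular, (A+μB)^{-1}∇(K·det(A+μB)) = A^{-1}∇(K·det A) + μ B^{-1}∇(K·det B). -/
set_option maxHeartbeats 1000000


open Matrix

noncomputable def Mfam (a b c α β γ : ℝ) : ℝ → ℝ → Matrix (Fin 2) (Fin 2) ℝ := fun r w =>
  !![a * w ^ 2 + b * w + α, (-2 * a * r * w - b * r - c * w + β) / 2;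
     (-2 * a * r * w - b * r - c * w + β) / 2, a * r ^ 2 + c * r + γ]

lemma key (a b c α β γ : ℝ) (K : ℝ → ℝ → ℝ)
    (hKsm : ContDiff ℝ (⊤ : ℕ∞) fun p : ℝ × ℝ => K p.1 p.2) (r w : ℝ)
    (hd : (Mfam a b c α β γ r w).det ≠ 0) :
    (Mfam a b c α β γ r w)⁻¹ *ᵥ
      ![pr (fun r w => K r w * (Mfam a b c α β γ r w).det) r w,
        pw (fun r w => K r w * (Mfam a b c α β γ r w).det) r w] =
    ![(a * r ^ 2 + c * r + γ) * pr K r w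
        - ((-2 * a * r * w - b * r - c * w + β) / 2) * pw K r w + K r w * (2 * a * r + c),
      -((-2 * a * r * w - b * r - c * w + β) / 2) * pr K r w
        + (a * w ^ 2 + b * w + α) * pw K r w + K r w * (2 * a * w + b)] := by
  have hdet : ∀ x y : ℝ, (Mfam a b c α β γ x y).det =
      (a * y ^ 2 + b * y + α) * (a * x ^ 2 + c * x + γ)
        - ((-2 * a * x * y - b * x - c * y + β) / 2) ^ 2 := by
    intro x y; simp [Mfam, Matrix.det_fin_two_of]; ring
  have hKdiff := hKsm.differentiable (by simp)
  have hK1 : ∀ x y : ℝ, HasDerivAt (fun t => K t y) (pr K x y) x := by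
    intro x y
    have h : DifferentiableAt ℝ (fun t => K t y) x := by
      exact (hKdiff.comp ((differentiable_id).prodMk (differentiable_const y))).differentiableAt
    exact h.hasDerivAt
  have hK2 : ∀ x y : ℝ, HasDerivAt (fun t => K x t) (pw K x y) y := by
    intro x y
    have h : DifferentiableAt ℝ (fun t => K x t) y := by
      exact (hKdiff.comp ((differentiable_const x).prodMk differentiable_id)).differentiableAt
    exact h.hasDerivAt
  -- derivative of det in r
  have h1 : HasDerivAt (fun x : ℝ => a * x ^ 2 + c * x + γ) (2 * a * r + c) r := by
    have := (((hasDerivAt_pow 2 r).const_mul a).fun_add ((hasDerivAt_id r).const_mul c)).add_const γ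
    refine this.congr_deriv ?_
    push_cast; ring
  have h2 : HasDerivAt (fun x : ℝ => (-2 * a * x * w - b * x - c * w + β) / 2)
      ((-2 * a * w - b) / 2) r := by
    have heq : (fun x : ℝ => (-2 * a * x * w - b * x - c * w + β) / 2)
        = fun x : ℝ => ((-2 * a * w) * x - b * x + (-(c * w) + β)) / 2 := by
      funext x; ring
    rw [heq]
    have := ((((hasDerivAt_id r).const_mul (-2 * a * w)).fun_sub
      ((hasDerivAt_id r).const_mul b)).add_const (-(c * w) + β)).div_const 2
    refine this.congr_deriv ?_; ring
  have hdr : HasDerivAt (fun x : ℝ => (a * w ^ 2 + b * w + α) * (a * x ^ 2 + c * x + γ)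
      - ((-2 * a * x * w - b * x - c * w + β) / 2) ^ 2)
      ((a * w ^ 2 + b * w + α) * (2 * a * r + c)
        - 2 * ((-2 * a * r * w - b * r - c * w + β) / 2) * ((-2 * a * w - b) / 2)) r := by
    have := (h1.const_mul (a * w ^ 2 + b * w + α)).fun_sub (h2.fun_pow 2)
    refine this.congr_deriv ?_; ring
  have h1w : HasDerivAt (fun y : ℝ => a * y ^ 2 + b * y + α) (2 * a * w + b) w := by
    have := (((hasDerivAt_pow 2 w).const_mul a).fun_add ((hasDerivAt_id w).const_mul b)).add_const α
    refine this.congr_deriv ?_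
    push_cast; ring
  have h2w : HasDerivAt (fun y : ℝ => (-2 * a * r * y - b * r - c * y + β) / 2)
      ((-2 * a * r - c) / 2) w := by
    have heq : (fun y : ℝ => (-2 * a * r * y - b * r - c * y + β) / 2)
        = fun y : ℝ => ((-2 * a * r) * y - c * y + (-(b * r) + β)) / 2 := by
      funext y; ring
    rw [heq]
    have := ((((hasDerivAt_id w).const_mul (-2 * a * r)).fun_sub
      ((hasDerivAt_id w).const_mul c)).add_const (-(b * r) + β)).div_const 2
    refine this.congr_deriv ?_; ring
  have hdw : HasDerivAt (fun y : ℝ => (a * y ^ 2 + b * y + α) * (a * r ^ 2 + c * r + γ)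
      - ((-2 * a * r * y - b * r - c * y + β) / 2) ^ 2)
      ((2 * a * w + b) * (a * r ^ 2 + c * r + γ)
        - 2 * ((-2 * a * r * w - b * r - c * w + β) / 2) * ((-2 * a * r - c) / 2)) w := by
    have := (h1w.mul_const (a * r ^ 2 + c * r + γ)).fun_sub (h2w.fun_pow 2)
    refine this.congr_deriv ?_; ring
  have hprv : pr (fun r w => K r w * (Mfam a b c α β γ r w).det) r w
      = pr K r w * ((a * w ^ 2 + b * w + α) * (a * r ^ 2 + c * r + γ)
          - ((-2 * a * r * w - b * r - c * w + β) / 2) ^ 2)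
        + K r w * ((a * w ^ 2 + b * w + α) * (2 * a * r + c)
          - 2 * ((-2 * a * r * w - b * r - c * w + β) / 2) * ((-2 * a * w - b) / 2)) := by
    have : pr (fun r w => K r w * (Mfam a b c α β γ r w).det) r w
        = deriv (fun x => K x w * ((a * w ^ 2 + b * w + α) * (a * x ^ 2 + c * x + γ)
          - ((-2 * a * x * w - b * x - c * w + β) / 2) ^ 2)) r := by
      simp only [pr, hdet]
    rw [this, ((hK1 r w).fun_mul hdr).deriv]
  have hpwv : pw (fun r w => K r w * (Mfam a b c α β γ r w).det) r w
      = pw K r w * ((a * w ^ 2 + b * w + α) * (a * r ^ 2 + c * r + γ)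
          - ((-2 * a * r * w - b * r - c * w + β) / 2) ^ 2)
        + K r w * ((2 * a * w + b) * (a * r ^ 2 + c * r + γ)
          - 2 * ((-2 * a * r * w - b * r - c * w + β) / 2) * ((-2 * a * r - c) / 2)) := by
    have : pw (fun r w => K r w * (Mfam a b c α β γ r w).det) r w
        = deriv (fun y => K r y * ((a * y ^ 2 + b * y + α) * (a * r ^ 2 + c * r + γ)
          - ((-2 * a * r * y - b * r - c * y + β) / 2) ^ 2)) w := by
      simp only [pw, hdet]
    rw [this, ((hK2 r w).fun_mul hdw).deriv]
  have hd0 : (a * w ^ 2 + b * w + α) * (a * r ^ 2 + c * r + γ)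
      - ((-2 * a * r * w - b * r - c * w + β) / 2) ^ 2 ≠ 0 := by
    rw [← hdet r w]; exact hd
  have hinv : (Mfam a b c α β γ r w)⁻¹ = ((Mfam a b c α β γ r w).det)⁻¹ •
      !![a * r ^ 2 + c * r + γ, -((-2 * a * r * w - b * r - c * w + β) / 2);
         -((-2 * a * r * w - b * r - c * w + β) / 2), a * w ^ 2 + b * w + α] := by
    rw [Matrix.inv_def, Ring.inverse_eq_inv']
    congr 1
    simp [Mfam, Matrix.adjugate_fin_two_of]
  rw [hprv, hpwv, hinv]
  funext i
  fin_cases i <;>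
  · simp [Matrix.mulVec, dotProduct, Fin.sum_univ_two]
    field_simp [hd]
    simp only [hdet]
    ring

/-- for symmetric nonsingular cyclic `2×2` matrices `A`, `B` and a solution
`K` of the associated fundamental equation, for any `μ ∈ ℝ` with `A + μB` nonsingular,
`(A+μB)⁻¹∇(K·det(A+μB)) = A⁻¹∇(K·det A) + μ·B⁻¹∇(K·det B)`. -/
theorem stmt_8 (a1 b1 c1 α1 β1 γ1 a2 b2 c2 α2 β2 γ2 : ℝ)
    (A B : ℝ → ℝ → Matrix (Fin 2) (Fin 2) ℝ)
    (hA : A = fun r w =>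
      !![a1 * w ^ 2 + b1 * w + α1, (-2 * a1 * r * w - b1 * r - c1 * w + β1) / 2;
         (-2 * a1 * r * w - b1 * r - c1 * w + β1) / 2, a1 * r ^ 2 + c1 * r + γ1])
    (hB : B = fun r w =>
      !![a2 * w ^ 2 + b2 * w + α2, (-2 * a2 * r * w - b2 * r - c2 * w + β2) / 2;
         (-2 * a2 * r * w - b2 * r - c2 * w + β2) / 2, a2 * r ^ 2 + c2 * r + γ2])
    (hdA : ∀ r w, (A r w).det ≠ 0)
    (hdB : ∀ r w, (B r w).det ≠ 0)
    (μ : ℝ)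
    (hdAB : ∀ r w, (A r w + μ • B r w).det ≠ 0)
    (K : ℝ → ℝ → ℝ)
    (hKsm : ContDiff ℝ (⊤ : ℕ∞) fun p : ℝ × ℝ => K p.1 p.2)
    (hK : ∀ r w, fundLHS (fun r w => A r w 0 0) (fun r w => A r w 0 1)
        (fun r w => A r w 1 1) (fun r w => B r w 0 0) (fun r w => B r w 0 1)
        (fun r w => B r w 1 1) K r w = 0) :
    ∀ r w,
      (A r w + μ • B r w)⁻¹ *ᵥ
        ![pr (fun r w => K r w * (A r w + μ • B r w).det) r w,
          pw (fun r w => K r w * (A r w + μ • B r w).det) r w]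
      = (A r w)⁻¹ *ᵥ
          ![pr (fun r w => K r w * (A r w).det) r w,
            pw (fun r w => K r w * (A r w).det) r w]
        + μ • ((B r w)⁻¹ *ᵥ
          ![pr (fun r w => K r w * (B r w).det) r w,
            pw (fun r w => K r w * (B r w).det) r w]) := by
  have hAe : A = Mfam a1 b1 c1 α1 β1 γ1 := hA
  have hBe : B = Mfam a2 b2 c2 α2 β2 γ2 := hB
  clear hA hB hK
  subst hAe hBe
  have hAB : ∀ r w : ℝ, Mfam a1 b1 c1 α1 β1 γ1 r w + μ • Mfam a2 b2 c2 α2 β2 γ2 r w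
      = Mfam (a1 + μ * a2) (b1 + μ * b2) (c1 + μ * c2) (α1 + μ * α2) (β1 + μ * β2)
          (γ1 + μ * γ2) r w := by
    intro r w
    ext i j
    fin_cases i <;> fin_cases j <;>
      simp [Mfam, Matrix.add_apply, Matrix.smul_apply, smul_eq_mul] <;> ring
  intro r w
  have hdAB' : (Mfam (a1 + μ * a2) (b1 + μ * b2) (c1 + μ * c2) (α1 + μ * α2) (β1 + μ * β2)
      (γ1 + μ * γ2) r w).det ≠ 0 := by rw [← hAB r w]; exact hdAB r w
  simp only [hAB]
  rw [key _ _ _ _ _ _ K hKsm r w hdAB', key _ _ _ _ _ _ K hKsm r w (hdA r w),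
    key _ _ _ _ _ _ K hKsm r w (hdB r w)]
  funext i
  fin_cases i <;>
    simp [Matrix.smul_apply, smul_eq_mul, Fin.sum_univ_two] <;> ring
end

section
/- Let A, B be two linearly independent symmetric 2×2 cyclic matrices with polynomial entries of the prescribed form. If (A',B') is another pair of cyclic matrices whose associated fundamental equation has the same coefficients at K_rr, K_rw, K_ww as that of (A,B), then A' and B' lie in the real linear span of A and B. -/
-- aux lemma 1: nonzero minor from independence
lemma aux_minor (u v : Fin 6 → ℝ)
    (h : ∀ c d : ℝ, (∀ i, c * u i + d * v i = 0) → c = 0 ∧ d = 0) :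
    ∃ k l, u k * v l - u l * v k ≠ 0 := by
  by_contra hcon
  push_neg at hcon
  by_cases hu : ∀ i, u i = 0
  · have := (h 1 0 (by intro i; simp [hu i])).1
    norm_num at this
  · push_neg at hu
    obtain ⟨k, hk⟩ := hu
    have := (h (v k) (-(u k)) (by intro i; linear_combination - hcon k i)).2
    exact hk (neg_eq_zero.mp this)

-- aux lemma 2: span from bracket equalities
lemma aux_span (x y u v : Fin 6 → ℝ)
    (h : ∀ i j, x i * y j - x j * y i = u i * v j - u j * v i)
    (k l : Fin 6) (hD : u k * v l - u l * v k ≠ 0) :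
    (∃ α β : ℝ, ∀ i, x i = α * u i + β * v i) ∧
    (∃ γ δ : ℝ, ∀ i, y i = γ * u i + δ * v i) := by
  set D := u k * v l - u l * v k with hDdef
  constructor
  · refine ⟨(x k * v l - x l * v k)/D, (u k * x l - u l * x k)/D, fun i => ?_⟩
    field_simp
    linear_combination x k * h i l + x l * h k i - x i * h k l
  · refine ⟨(y k * v l - y l * v k)/D, (u k * y l - u l * y k)/D, fun i => ?_⟩
    field_simp
    linear_combination y k * h i l + y l * h k i - y i * h k l


open Matrix

/-- let `A`, `B` be linearly independent symmetric `2×2` cyclic matrices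
(entries of the prescribed polynomial form).  If `(A',B')` is another pair of cyclic
matrices whose fundamental equation has the same coefficients at `K_rr`, `K_rw`, `K_ww`
as that of `(A,B)`, then `A'` and `B'` lie in the real linear span of `A` and `B`. -/
theorem stmt_11 (a1 b1 c1 α1 β1 γ1 a2 b2 c2 α2 β2 γ2
    a3 b3 c3 α3 β3 γ3 a4 b4 c4 α4 β4 γ4 : ℝ)
    (A B A' B' : ℝ → ℝ → Matrix (Fin 2) (Fin 2) ℝ)
    (hA : A = fun r w =>
      !![a1 * w ^ 2 + b1 * w + α1, (-2 * a1 * r * w - b1 * r - c1 * w + β1) / 2;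
         (-2 * a1 * r * w - b1 * r - c1 * w + β1) / 2, a1 * r ^ 2 + c1 * r + γ1])
    (hB : B = fun r w =>
      !![a2 * w ^ 2 + b2 * w + α2, (-2 * a2 * r * w - b2 * r - c2 * w + β2) / 2;
         (-2 * a2 * r * w - b2 * r - c2 * w + β2) / 2, a2 * r ^ 2 + c2 * r + γ2])
    (hA' : A' = fun r w =>
      !![a3 * w ^ 2 + b3 * w + α3, (-2 * a3 * r * w - b3 * r - c3 * w + β3) / 2;
         (-2 * a3 * r * w - b3 * r - c3 * w + β3) / 2, a3 * r ^ 2 + c3 * r + γ3])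
    (hB' : B' = fun r w =>
      !![a4 * w ^ 2 + b4 * w + α4, (-2 * a4 * r * w - b4 * r - c4 * w + β4) / 2;
         (-2 * a4 * r * w - b4 * r - c4 * w + β4) / 2, a4 * r ^ 2 + c4 * r + γ4])
    -- linear independence of A and B
    (hindep : ∀ c d : ℝ, (∀ r w, c • A r w + d • B r w = 0) → c = 0 ∧ d = 0)
    -- the second-order coefficients of the two fundamental equations coincide
    (hcoef : ∀ r w,
      A' r w 0 1 * B' r w 1 1 - A' r w 1 1 * B' r w 0 1
        = A r w 0 1 * B r w 1 1 - A r w 1 1 * B r w 0 1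
      ∧ A' r w 1 1 * B' r w 0 0 - A' r w 0 0 * B' r w 1 1
        = A r w 1 1 * B r w 0 0 - A r w 0 0 * B r w 1 1
      ∧ A' r w 0 0 * B' r w 0 1 - A' r w 0 1 * B' r w 0 0
        = A r w 0 0 * B r w 0 1 - A r w 0 1 * B r w 0 0) :
    ∃ α β γ δ : ℝ,
      (∀ r w, A' r w = α • A r w + β • B r w)
      ∧ (∀ r w, B' r w = γ • A r w + δ • B r w) := by

  subst hA hB hA' hB'
  -- extract the three coefficient identities as explicit polynomial equations (by defeq)
  have h0 : ∀ r w : ℝ,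
      (-2 * a3 * r * w - b3 * r - c3 * w + β3) / 2 * (a4 * r ^ 2 + c4 * r + γ4)
        - (a3 * r ^ 2 + c3 * r + γ3) * ((-2 * a4 * r * w - b4 * r - c4 * w + β4) / 2)
      = (-2 * a1 * r * w - b1 * r - c1 * w + β1) / 2 * (a2 * r ^ 2 + c2 * r + γ2)
        - (a1 * r ^ 2 + c1 * r + γ1) * ((-2 * a2 * r * w - b2 * r - c2 * w + β2) / 2) :=
    fun r w => (hcoef r w).1
  have h1 : ∀ r w : ℝ,
      (a3 * r ^ 2 + c3 * r + γ3) * (a4 * w ^ 2 + b4 * w + α4)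
        - (a3 * w ^ 2 + b3 * w + α3) * (a4 * r ^ 2 + c4 * r + γ4)
      = (a1 * r ^ 2 + c1 * r + γ1) * (a2 * w ^ 2 + b2 * w + α2)
        - (a1 * w ^ 2 + b1 * w + α1) * (a2 * r ^ 2 + c2 * r + γ2) :=
    fun r w => (hcoef r w).2.1
  have h2 : ∀ r w : ℝ,
      (a3 * w ^ 2 + b3 * w + α3) * ((-2 * a4 * r * w - b4 * r - c4 * w + β4) / 2)
        - (-2 * a3 * r * w - b3 * r - c3 * w + β3) / 2 * (a4 * w ^ 2 + b4 * w + α4)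
      = (a1 * w ^ 2 + b1 * w + α1) * ((-2 * a2 * r * w - b2 * r - c2 * w + β2) / 2)
        - (-2 * a1 * r * w - b1 * r - c1 * w + β1) / 2 * (a2 * w ^ 2 + b2 * w + α2) :=
    fun r w => (hcoef r w).2.2
  have hb01 : a3 * b4 - b3 * a4 = a1 * b2 - b1 * a2 := by
    linear_combination ((-1 : ℝ)/3) * h0 0 0 + (1 : ℝ) * h0 1 0 + (-1 : ℝ) * h0 2 0 + ((1 : ℝ)/3) * h0 3 0
  have hb02 : a3 * c4 - c3 * a4 = a1 * c2 - c1 * a2 := by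
    linear_combination (2 : ℝ) * h0 0 0 + (-2 : ℝ) * h0 0 1 + (-5 : ℝ) * h0 1 0 + (5 : ℝ) * h0 1 1 + (4 : ℝ) * h0 2 0 + (-4 : ℝ) * h0 2 1 + (-1 : ℝ) * h0 3 0 + (1 : ℝ) * h0 3 1
  have hb03 : a3 * α4 - α3 * a4 = a1 * α2 - α1 * a2 := by
    linear_combination ((1 : ℝ)/2) * h1 0 0 + (-1 : ℝ) * h1 1 0 + ((1 : ℝ)/2) * h1 2 0
  have hb04 : a3 * β4 - β3 * a4 = a1 * β2 - β1 * a2 := by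
    linear_combination (-2 : ℝ) * h0 0 0 + (5 : ℝ) * h0 1 0 + (-4 : ℝ) * h0 2 0 + (1 : ℝ) * h0 3 0 + ((9 : ℝ)/4) * h1 0 0 + (-3 : ℝ) * h1 0 1 + ((3 : ℝ)/4) * h1 0 2 + (-3 : ℝ) * h1 1 0 + (4 : ℝ) * h1 1 1 + (-1 : ℝ) * h1 1 2 + ((3 : ℝ)/4) * h1 2 0 + (-1 : ℝ) * h1 2 1 + ((1 : ℝ)/4) * h1 2 2
  have hb05 : a3 * γ4 - γ3 * a4 = a1 * γ2 - γ1 * a2 := by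
    linear_combination ((-11 : ℝ)/6) * h0 0 0 + ((11 : ℝ)/6) * h0 0 1 + (3 : ℝ) * h0 1 0 + (-3 : ℝ) * h0 1 1 + ((-3 : ℝ)/2) * h0 2 0 + ((3 : ℝ)/2) * h0 2 1 + ((1 : ℝ)/3) * h0 3 0 + ((-1 : ℝ)/3) * h0 3 1
  have hb12 : b3 * c4 - c3 * b4 = b1 * c2 - c1 * b2 := by
    linear_combination ((-9 : ℝ)/4) * h1 0 0 + (3 : ℝ) * h1 0 1 + ((-3 : ℝ)/4) * h1 0 2 + (3 : ℝ) * h1 1 0 + (-4 : ℝ) * h1 1 1 + (1 : ℝ) * h1 1 2 + ((-3 : ℝ)/4) * h1 2 0 + (1 : ℝ) * h1 2 1 + ((-1 : ℝ)/4) * h1 2 2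
  have hb13 : b3 * α4 - α3 * b4 = b1 * α2 - α1 * b2 := by
    linear_combination (-2 : ℝ) * h2 0 0 + (2 : ℝ) * h2 1 0
  have hb14 : b3 * β4 - β3 * b4 = b1 * β2 - β1 * b2 := by
    linear_combination ((3 : ℝ)/2) * h1 0 0 + (-2 : ℝ) * h1 1 0 + ((1 : ℝ)/2) * h1 2 0 + ((-11 : ℝ)/3) * h2 0 0 + (6 : ℝ) * h2 0 1 + (-3 : ℝ) * h2 0 2 + ((2 : ℝ)/3) * h2 0 3
  have hb15 : b3 * γ4 - γ3 * b4 = b1 * γ2 - γ1 * b2 := by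
    linear_combination ((3 : ℝ)/2) * h1 0 0 + (-2 : ℝ) * h1 0 1 + ((1 : ℝ)/2) * h1 0 2
  have hb23 : c3 * α4 - α3 * c4 = c1 * α2 - α1 * c2 := by
    linear_combination ((-3 : ℝ)/2) * h1 0 0 + (2 : ℝ) * h1 1 0 + ((-1 : ℝ)/2) * h1 2 0
  have hb24 : c3 * β4 - β3 * c4 = c1 * β2 - β1 * c2 := by
    linear_combination ((11 : ℝ)/3) * h0 0 0 + (-6 : ℝ) * h0 1 0 + (3 : ℝ) * h0 2 0 + ((-2 : ℝ)/3) * h0 3 0 + ((-3 : ℝ)/2) * h1 0 0 + (2 : ℝ) * h1 0 1 + ((-1 : ℝ)/2) * h1 0 2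
  have hb25 : c3 * γ4 - γ3 * c4 = c1 * γ2 - γ1 * c2 := by
    linear_combination (2 : ℝ) * h0 0 0 + (-2 : ℝ) * h0 0 1
  have hb34 : α3 * β4 - β3 * α4 = α1 * β2 - β1 * α2 := by
    linear_combination (2 : ℝ) * h2 0 0
  have hb35 : α3 * γ4 - γ3 * α4 = α1 * γ2 - γ1 * α2 := by
    linear_combination (-1 : ℝ) * h1 0 0
  have hb45 : β3 * γ4 - γ3 * β4 = β1 * γ2 - γ1 * β2 := by
    linear_combination (2 : ℝ) * h0 0 0
  -- package the coefficient 6-vectors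
  set u : Fin 6 → ℝ := ![a1, b1, c1, α1, β1, γ1] with hu
  set v : Fin 6 → ℝ := ![a2, b2, c2, α2, β2, γ2] with hv
  set x : Fin 6 → ℝ := ![a3, b3, c3, α3, β3, γ3] with hx
  set y : Fin 6 → ℝ := ![a4, b4, c4, α4, β4, γ4] with hy
  have hbr : ∀ i j : Fin 6, x i * y j - x j * y i = u i * v j - u j * v i := by
    intro i j
    fin_cases i <;> fin_cases j
    exacts [(by ring : a3 * a4 - a3 * a4 = a1 * a2 - a1 * a2), hb01, hb02, hb03, hb04, hb05, (show b3 * a4 - a3 * b4 = b1 * a2 - a1 * b2 by linear_combination -hb01), (by ring : b3 * b4 - b3 * b4 = b1 * b2 - b1 * b2), hb12, hb13, hb14, hb15, (show c3 * a4 - a3 * c4 = c1 * a2 - a1 * c2 by linear_combination -hb02), (show c3 * b4 - b3 * c4 = c1 * b2 - b1 * c2 by linear_combination -hb12), (by ring : c3 * c4 - c3 * c4 = c1 * c2 - c1 * c2), hb23, hb24, hb25, (show α3 * a4 - a3 * α4 = α1 * a2 - a1 * α2 by linear_combination -hb03), (show α3 * b4 - b3 * α4 = α1 * b2 - b1 *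 α2 by linear_combination -hb13), (show α3 * c4 - c3 * α4 = α1 * c2 - c1 * α2 by linear_combination -hb23), (by ring : α3 * α4 - α3 * α4 = α1 * α2 - α1 * α2), hb34, hb35, (show β3 * a4 - a3 * β4 = β1 * a2 - a1 * β2 by linear_combination -hb04), (show β3 * b4 - b3 * β4 = β1 * b2 - b1 * β2 by linear_combination -hb14), (show β3 * c4 - c3 * β4 = β1 * c2 - c1 * β2 by linear_combination -hb24), (show β3 * α4 - α3 * β4 = β1 * α2 - α1 * β2 by linear_combination -hb34), (by ring : β3 * β4 - β3 * β4 = β1 * β2 - β1 * β2), hb45, (show γ3 * a4 - a3 * γ4 = γ1 * a2 - a1 * γ2 by linear_combination -hb05), (show γ3 * b4 - b3 * γ4 = γ1 * b2 - b1 * γ2 by linear_combination -hb15), (show γ3 * c4 - c3 * γ4 = γ1 * c2 - c1 * γ2 by linear_combination -hb25), (show γ3 * α4 - α3 * γ4 = γ1 * α2 - α1 * γ2 by linear_combination -hb35), (show γ3 * β4 - β3 * γ4 = γ1 * β2 - β1 * γ2 by linear_combination -hb45), (by ring : γ3 * γ4 - γ3 * γ4 = γ1 * γ2 - γ1 * 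γ2)]
  -- linear independence of the coefficient vectors
  have hind' : ∀ c d : ℝ, (∀ i, c * u i + d * v i = 0) → c = 0 ∧ d = 0 := by
    intro c d hcd
    have e0 : c * a1 + d * a2 = 0 := hcd 0
    have e1 : c * b1 + d * b2 = 0 := hcd 1
    have e2 : c * c1 + d * c2 = 0 := hcd 2
    have e3 : c * α1 + d * α2 = 0 := hcd 3
    have e4 : c * β1 + d * β2 = 0 := hcd 4
    have e5 : c * γ1 + d * γ2 = 0 := hcd 5
    apply hindep c d
    intro r w
    ext i j
    fin_cases i <;> fin_cases j <;>
      simp only [Fin.mk_zero, Fin.mk_one, Matrix.of_apply, Matrix.add_apply, Matrix.smul_apply, smul_eq_mul, Matrix.zero_apply,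
        Matrix.cons_val', Matrix.cons_val_zero, Matrix.cons_val_one, Matrix.head_cons,
        Matrix.empty_val', Matrix.cons_val_fin_one, Matrix.head_fin_const]
    · linear_combination w ^ 2 * e0 + w * e1 + e3
    · linear_combination (-(r * w)) * e0 + (-(r / 2)) * e1 + (-(w / 2)) * e2 + (1 / 2 : ℝ) * e4
    · linear_combination (-(r * w)) * e0 + (-(r / 2)) * e1 + (-(w / 2)) * e2 + (1 / 2 : ℝ) * e4
    · linear_combination r ^ 2 * e0 + r * e2 + e5
  obtain ⟨k, l, hD⟩ := aux_minor u v hind'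
  obtain ⟨⟨α, β, hxs⟩, ⟨γ, δ, hys⟩⟩ := aux_span x y u v hbr k l hD
  have p0 : a3 = α * a1 + β * a2 := hxs 0
  have p1 : b3 = α * b1 + β * b2 := hxs 1
  have p2 : c3 = α * c1 + β * c2 := hxs 2
  have p3 : α3 = α * α1 + β * α2 := hxs 3
  have p4 : β3 = α * β1 + β * β2 := hxs 4
  have p5 : γ3 = α * γ1 + β * γ2 := hxs 5
  have q0 : a4 = γ * a1 + δ * a2 := hys 0
  have q1 : b4 = γ * b1 + δ * b2 := hys 1
  have q2 : c4 = γ * c1 + δ * c2 := hys 2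
  have q3 : α4 = γ * α1 + δ * α2 := hys 3
  have q4 : β4 = γ * β1 + δ * β2 := hys 4
  have q5 : γ4 = γ * γ1 + δ * γ2 := hys 5
  refine ⟨α, β, γ, δ, fun r w => ?_, fun r w => ?_⟩
  · ext i j
    fin_cases i <;> fin_cases j <;>
      simp only [Fin.mk_zero, Fin.mk_one, Matrix.of_apply, Matrix.add_apply, Matrix.smul_apply, smul_eq_mul,
        Matrix.cons_val', Matrix.cons_val_zero, Matrix.cons_val_one, Matrix.head_cons,
        Matrix.empty_val', Matrix.cons_val_fin_one, Matrix.head_fin_const]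
    · linear_combination w ^ 2 * p0 + w * p1 + p3
    · linear_combination (-(r * w)) * p0 + (-(r / 2)) * p1 + (-(w / 2)) * p2 + (1 / 2 : ℝ) * p4
    · linear_combination (-(r * w)) * p0 + (-(r / 2)) * p1 + (-(w / 2)) * p2 + (1 / 2 : ℝ) * p4
    · linear_combination r ^ 2 * p0 + r * p2 + p5
  · ext i j
    fin_cases i <;> fin_cases j <;>
      simp only [Fin.mk_zero, Fin.mk_one, Matrix.of_apply, Matrix.add_apply, Matrix.smul_apply, smul_eq_mul,
        Matrix.cons_val', Matrix.cons_val_zero, Matrix.cons_val_one, Matrix.head_cons,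
        Matrix.empty_val', Matrix.cons_val_fin_one, Matrix.head_fin_const]
    · linear_combination w ^ 2 * q0 + w * q1 + q3
    · linear_combination (-(r * w)) * q0 + (-(r / 2)) * q1 + (-(w / 2)) * q2 + (1 / 2 : ℝ) * q4
    · linear_combination (-(r * w)) * q0 + (-(r / 2)) * q1 + (-(w / 2)) * q2 + (1 / 2 : ℝ) * q4
    · linear_combination r ^ 2 * q0 + r * q2 + q5
end

section
/- Suppose a driven qLN system q̈ = -(1/2)A^{-1}∇k has second equation q̈₂ = M₂(q₂) depending only on q₂. Then along any characteristic curve x ↦ q(x) satisfying q̇₁ = A₁₂(q), q̇₂ = -A₁₁(q), the function k satisfies dk(q(x))/dx = 2·det(A(q(x)))·M₂(q₂(x)); consequently k(q(x)) = det(A(q(x)))·g(q₂(x)) + const where g(q₂) = (-2/A₁₁(q₂))∫M₂(q₂)dq₂. In particular d/dx[det A(q(x))] = -det(A)·∂₂A₁₁ along characteristics. -/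
/-- for a driven qLN system (`A` cyclic with `A₁₁ = A₁₁(q₂) ≠ 0`,
driven condition `A₁₂∂₁k - A₁₁∂₂k = 2·det(A)·M₂(q₂)`), along any characteristic curve
`q̇₁ = A₁₂(q)`, `q̇₂ = -A₁₁(q₂)` one has `dk/dx = 2·det(A)·M₂(q₂)`; consequently
`k = det(A)·g(q₂) + const` with `g = (-2/A₁₁)∫M₂`, and
`d/dx[det A] = -det(A)·∂₂A₁₁` along characteristics. -/
theorem stmt_15 (a b c al be ga : ℝ)
    (A11 : ℝ → ℝ) (A12 : ℝ → ℝ → ℝ) (A22 : ℝ → ℝ)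
    (hA11 : A11 = fun w => a * w ^ 2 + b * w + al)
    (hA12 : A12 = fun r w => (-2 * a * r * w - b * r - c * w + be) / 2)
    (hA22 : A22 = fun r => a * r ^ 2 + c * r + ga)
    (hA11ne : ∀ w, A11 w ≠ 0)
    (k : ℝ → ℝ → ℝ) (hk : ContDiff ℝ (⊤ : ℕ∞) fun p : ℝ × ℝ => k p.1 p.2)
    (M2 G : ℝ → ℝ) (hM2 : Continuous M2)
    (hG : ∀ w, HasDerivAt G (M2 w) w)  -- G = ∫ M₂ dq₂
    (hdriven : ∀ r w, A12 r w * pr k r w - A11 w * pw k r w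
        = 2 * (A11 w * A22 r - A12 r w ^ 2) * M2 w)
    (q1 q2 : ℝ → ℝ)
    (hq1 : ∀ x, HasDerivAt q1 (A12 (q1 x) (q2 x)) x)
    (hq2 : ∀ x, HasDerivAt q2 (-(A11 (q2 x))) x) :
    (∀ x, deriv (fun t => k (q1 t) (q2 t)) x
        = 2 * (A11 (q2 x) * A22 (q1 x) - A12 (q1 x) (q2 x) ^ 2) * M2 (q2 x))
    ∧ (∃ C : ℝ, ∀ x, k (q1 x) (q2 x)
        = (A11 (q2 x) * A22 (q1 x) - A12 (q1 x) (q2 x) ^ 2)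
          * ((-2 / A11 (q2 x)) * G (q2 x)) + C)
    ∧ (∀ x, deriv (fun t => A11 (q2 t) * A22 (q1 t) - A12 (q1 t) (q2 t) ^ 2) x
        = -(A11 (q2 x) * A22 (q1 x) - A12 (q1 x) (q2 x) ^ 2) * deriv A11 (q2 x)) := by
  -- derivative of A11
  have hA11d : ∀ w, HasDerivAt A11 (2 * a * w + b) w := by
    intro w
    rw [hA11]
    have h := (((hasDerivAt_pow 2 w).const_mul a).add
      ((hasDerivAt_id w).const_mul b)).add_const al
    refine h.congr_deriv ?_
    ring
  -- notation
  set D : ℝ → ℝ := fun t => A11 (q2 t) * A22 (q1 t) - A12 (q1 t) (q2 t) ^ 2 with hDdef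
  -- derivative of det along the curve
  have hD : ∀ x, HasDerivAt D (-(D x) * (2 * a * (q2 x) + b)) x := by
    intro x
    have h1 := hq1 x
    have h2 := hq2 x
    rw [hA12] at h1
    rw [hA11] at h2
    simp only at h1 h2
    have hA11c : HasDerivAt (fun t => A11 (q2 t))
        ((2 * a * q2 x + b) * -(a * q2 x ^ 2 + b * q2 x + al)) x := by
      have := (hA11d (q2 x)).comp x ((hA11 ▸ hq2 x))
      simpa [hA11, Function.comp_def] using this
    have hA22c : HasDerivAt (fun t => A22 (q1 t))
        ((2 * a * q1 x + c) * ((-2 * a * q1 x * q2 x - b * q1 x - c * q2 x + be) / 2)) x := by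
      have hA22d : HasDerivAt A22 (2 * a * q1 x + c) (q1 x) := by
        rw [hA22]
        have h := (((hasDerivAt_pow 2 (q1 x)).const_mul a).add
          ((hasDerivAt_id (q1 x)).const_mul c)).add_const ga
        refine h.congr_deriv ?_
        ring
      exact hA22d.comp x h1
    have hA12c : HasDerivAt (fun t => A12 (q1 t) (q2 t))
        (((-2 * a * q2 x - b) * ((-2 * a * q1 x * q2 x - b * q1 x - c * q2 x + be) / 2)
          + (-2 * a * q1 x - c) * (-(a * q2 x ^ 2 + b * q2 x + al))) / 2) x := by
      rw [hA12]
      have hnum : HasDerivAt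
          (fun t => -2 * a * q1 t * q2 t - b * q1 t - c * q2 t + be)
          ((-2 * a * q2 x - b) * ((-2 * a * q1 x * q2 x - b * q1 x - c * q2 x + be) / 2)
            + (-2 * a * q1 x - c) * (-(a * q2 x ^ 2 + b * q2 x + al))) x := by
        have hm : HasDerivAt (fun t => -2 * a * q1 t * q2 t)
            (-2 * a * ((-2 * a * q1 x * q2 x - b * q1 x - c * q2 x + be) / 2) * q2 x
              + -2 * a * q1 x * (-(a * q2 x ^ 2 + b * q2 x + al))) x := by
          have := ((h1.const_mul (-2 * a)).mul h2)
          exact this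
        have := ((hm.sub (h1.const_mul b)).sub (h2.const_mul c)).add_const be
        refine this.congr_deriv ?_
        ring
      exact hnum.div_const 2
    have := (hA11c.mul hA22c).sub (((hA12c.pow 2)))
    refine this.congr_deriv ?_
    simp only [hDdef, hA11, hA12, hA22]
    ring
  -- derivative of k along the curve
  have hkd : ∀ x, HasDerivAt (fun t => k (q1 t) (q2 t)) (2 * D x * M2 (q2 x)) x := by
    intro x
    have hfd : HasFDerivAt (fun p : ℝ × ℝ => k p.1 p.2)
        (fderiv ℝ (fun p : ℝ × ℝ => k p.1 p.2) (q1 x, q2 x)) (q1 x, q2 x) :=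
      ((hk.differentiable (by simp)) (q1 x, q2 x)).hasFDerivAt
    set f' := fderiv ℝ (fun p : ℝ × ℝ => k p.1 p.2) (q1 x, q2 x) with hf'
    have hcurve : HasDerivAt (fun t => ((q1 t, q2 t) : ℝ × ℝ))
        (A12 (q1 x) (q2 x), -(A11 (q2 x))) x := (hq1 x).prodMk (hq2 x)
    have hcomp := hfd.comp_hasDerivAt x hcurve
    have hpr : pr k (q1 x) (q2 x) = f' (1, 0) := by
      have h := hfd.comp_hasDerivAt (q1 x)
        ((hasDerivAt_id (q1 x)).prodMk (hasDerivAt_const (q1 x) (q2 x)))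
      have h' : HasDerivAt (fun s => k s (q2 x)) (f' (1, 0)) (q1 x) := by
        simpa [Function.comp_def] using h
      exact h'.deriv
    have hpw : pw k (q1 x) (q2 x) = f' (0, 1) := by
      have h := hfd.comp_hasDerivAt (q2 x)
        ((hasDerivAt_const (q2 x) (q1 x)).prodMk (hasDerivAt_id (q2 x)))
      have h' : HasDerivAt (fun s => k (q1 x) s) (f' (0, 1)) (q2 x) := by
        simpa [Function.comp_def] using h
      exact h'.deriv
    have key : f' (A12 (q1 x) (q2 x), -(A11 (q2 x)))
        = A12 (q1 x) (q2 x) * f' (1, 0) + (-(A11 (q2 x))) * f' (0, 1) := by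
      have hv : (A12 (q1 x) (q2 x), -(A11 (q2 x)))
          = A12 (q1 x) (q2 x) • ((1 : ℝ), (0 : ℝ))
            + (-(A11 (q2 x))) • ((0 : ℝ), (1 : ℝ)) := by
        simp [Prod.ext_iff]
      rw [hv, map_add, map_smul, map_smul, smul_eq_mul, smul_eq_mul]
    have hval : f' (A12 (q1 x) (q2 x), -(A11 (q2 x))) = 2 * D x * M2 (q2 x) := by
      rw [key, ← hpr, ← hpw]
      show _ = 2 * (A11 (q2 x) * A22 (q1 x) - A12 (q1 x) (q2 x) ^ 2) * M2 (q2 x)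
      linarith [hdriven (q1 x) (q2 x)]
    exact hval ▸ hcomp
  refine ⟨fun x => by rw [(hkd x).deriv, hDdef], ?_, fun x => by
    rw [(hD x).deriv, (hA11d (q2 x)).deriv, hDdef]⟩
  -- part 2
  set Φ : ℝ → ℝ := fun t => k (q1 t) (q2 t) - D t * ((-2 / A11 (q2 t)) * G (q2 t))
    with hΦdef
  have hΦ : ∀ x, HasDerivAt Φ 0 x := by
    intro x
    have hA11c : HasDerivAt (fun t => A11 (q2 t))
        ((2 * a * q2 x + b) * -(A11 (q2 x))) x :=
      (hA11d (q2 x)).comp x (hq2 x)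
    have hGc : HasDerivAt (fun t => G (q2 t)) (M2 (q2 x) * -(A11 (q2 x))) x :=
      (hG (q2 x)).comp x (hq2 x)
    have hdiv : HasDerivAt (fun t => -2 / A11 (q2 t))
        ((0 * A11 (q2 x) - (-2) * ((2 * a * q2 x + b) * -(A11 (q2 x)))) / A11 (q2 x) ^ 2)
        x := (hasDerivAt_const x (-2)).div hA11c (hA11ne (q2 x))
    have hprod := (hD x).mul (hdiv.mul hGc)
    have hfull := (hkd x).sub hprod
    refine hfull.congr_deriv ?_
    have hne := hA11ne (q2 x)
    simp only [Pi.mul_apply]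
    field_simp
    ring
  have hconst : ∀ x, Φ x = Φ 0 := fun x =>
    is_const_of_deriv_eq_zero (fun t => (hΦ t).differentiableAt)
      (fun t => (hΦ t).deriv) x 0
  refine ⟨Φ 0, fun x => ?_⟩
  have := hconst x
  simp only [hΦdef, hDdef] at this ⊢
  linarith
end

section
/- Let A be a symmetric 2×2 matrix satisfying the cyclic conditions with A₁₁ ≠ 0. Then the function ψ(q) = det(A(q))/A₁₁(q₂) = A₂₂ - A₁₂²/A₁₁ is constant along the characteristic curves q̇₁ = A₁₂(q), q̇₂ = -A₁₁(q); i.e., A₁₂·∂₁ψ - A₁₁·∂₂ψ = 0 identically. -/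
/-!
For `ψ = A₂₂ - A₁₂²/A₁₁` one has
`A₁₂ ∂₁ψ - A₁₁ ∂₂ψ = A₁₂ (A₂₂' + 2 ∂₂A₁₂) - (A₁₂²/A₁₁) (A₁₁' + 2 ∂₁A₁₂)`,
and both brackets vanish by the differential form of the cyclic conditions.
-/

theorem hasDerivAt_quadratic (p q s x : ℝ) :
    HasDerivAt (fun t => p * t ^ 2 + q * t + s) (2 * p * x + q) x :=
  ((((hasDerivAt_pow 2 x).const_mul p).add ((hasDerivAt_id x).const_mul q)).add_const s
    ).congr_deriv (by push_cast; ring)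

theorem characteristic_derivative_schur_eq_zero {A11 A22 : ℝ → ℝ} {A12 : ℝ → ℝ → ℝ}
    {r w d11 d22 e1 e2 : ℝ}
    (h11 : HasDerivAt A11 d11 w) (h22 : HasDerivAt A22 d22 r)
    (h1 : HasDerivAt (fun x => A12 x w) e1 r) (h2 : HasDerivAt (fun y => A12 r y) e2 w)
    (hc1 : d11 + 2 * e1 = 0) (hc2 : d22 + 2 * e2 = 0) (hne : A11 w ≠ 0) :
    A12 r w * pr (fun r w => A22 r - A12 r w ^ 2 / A11 w) r w
      - A11 w * pw (fun r w => A22 r - A12 r w ^ 2 / A11 w) r w = 0 := by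
  have hr : HasDerivAt (fun x => A22 x - A12 x w ^ 2 / A11 w)
      (d22 - 2 * A12 r w * e1 / A11 w) r :=
    (h22.fun_sub ((h1.fun_pow 2).div_const (A11 w))).congr_deriv (by norm_num)
  have hw : HasDerivAt (fun y => A22 r - A12 r y ^ 2 / A11 y)
      ((A12 r w ^ 2 * d11 - 2 * A12 r w * e2 * A11 w) / A11 w ^ 2) w :=
    ((hasDerivAt_const w (A22 r)).fun_sub ((h2.fun_pow 2).fun_div h11 hne)).congr_deriv
      (by push_cast; ring)
  rw [pr, pw, hr.deriv, hw.deriv]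
  field_simp
  linear_combination A12 r w * A11 w * hc2 - A12 r w ^ 2 * hc1

/-- for a symmetric `2×2` cyclic matrix `A` with `A₁₁ ≠ 0`, the function
`ψ = det(A)/A₁₁ = A₂₂ - A₁₂²/A₁₁` is constant along the characteristic curves
`q̇₁ = A₁₂`, `q̇₂ = -A₁₁`, i.e. `A₁₂·∂₁ψ - A₁₁·∂₂ψ = 0` identically. -/
theorem stmt_16 (a b c al be ga : ℝ)
    (A11 : ℝ → ℝ) (A12 : ℝ → ℝ → ℝ) (A22 : ℝ → ℝ)
    (hA11 : A11 = fun w => a * w ^ 2 + b * w + al)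
    (hA12 : A12 = fun r w => (-2 * a * r * w - b * r - c * w + be) / 2)
    (hA22 : A22 = fun r => a * r ^ 2 + c * r + ga)
    (hA11ne : ∀ w, A11 w ≠ 0)
    (ψ : ℝ → ℝ → ℝ)
    (hψ : ψ = fun r w => A22 r - A12 r w ^ 2 / A11 w) :
    ∀ r w, A12 r w * pr ψ r w - A11 w * pw ψ r w = 0 := by
  subst hψ
  intro r w
  have h11 : HasDerivAt A11 (2 * a * w + b) w := hA11 ▸ hasDerivAt_quadratic a b al w
  have h22 : HasDerivAt A22 (2 * a * r + c) r := hA22 ▸ hasDerivAt_quadratic a c ga r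
  have h1 : HasDerivAt (fun x => A12 x w) (-(2 * a * w + b) / 2) r := by
    have hslice : (fun x => A12 x w) = fun x => x * (-(2 * a * w + b) / 2) + (-c * w + be) / 2 := by
      funext x; rw [hA12]; ring
    exact hslice ▸ (hasDerivAt_mul_const _).add_const _
  have h2 : HasDerivAt (fun y => A12 r y) (-(2 * a * r + c) / 2) w := by
    have hslice : (fun y => A12 r y) = fun y => y * (-(2 * a * r + c) / 2) + (-b * r + be) / 2 := by
      funext y; rw [hA12]; ring
    exact hslice ▸ (hasDerivAt_mul_const _).add_const _
  exact characteristic_derivative_schur_eq_zero h11 h22 h1 h2 (by ring) (by ring) (hA11ne w)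
end
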